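/- For every N ≥ 2 and every real s, the moment generating function Σ_{k≥0} e^{sk} * P_N^k / D_N is bounded above by 3 * e^{e^s/2 + 3/2}, uniformly in N. -/

import Mathlib

/-- Number of derangements of an `N`-element set. -/
noncomputable def numDerangementsOf (N : ℕ) : ℕ :=
  Nat.card {σ : Equiv.Perm (Fin N) // ∀ i, σ i ≠ i}

/-- Number of derangements of an `N`-element set having exactly `k` 2-cycles. -/
noncomputable def numDerangementsWithPairs (N k : ℕ) : ℕ :=
  Nat.card {σ : Equiv.Perm (Fin N) // (∀ i, σ i ≠ i) ∧ σ.cycleType.count 2 = k}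

/-!
Fixing the `k` two-cycles of a permutation of an `N`-set, the class-size formula for cycle types
matches the permutations with exactly `k` two-cycles, cycle type by cycle type, with the
permutations of the remaining `N - 2k` points; hence they number at most `N! / (2^k k!)`.
Together with `N! ≤ 3 D_N` this bounds the `k`-th term of the series by `3 (e^s / 2)^k / k!`,
and these sum to `3 exp (e^s / 2)`.
-/

open Finset Nat

namespace Multiset

variable {α : Type*} [DecidableEq α]

theorem prod_factorial_count_add_replicate {m : Multiset α} {a : α} (ha : a ∉ m) (k : ℕ) :
    ∏ n ∈ (m + replicate k a).toFinset, ((m + replicate k a).count n)! =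
      k ! * ∏ n ∈ m.toFinset, (m.count n)! := by
  have hsub : (m + replicate k a).toFinset ⊆ insert a m.toFinset := by
    intro n hn
    simp only [Multiset.mem_toFinset, Multiset.mem_add, Multiset.mem_replicate] at hn
    simp only [Finset.mem_insert, Multiset.mem_toFinset]
    tauto
  rw [Finset.prod_subset hsub fun n _ hn => by
      rw [Multiset.count_eq_zero_of_notMem (mt Multiset.mem_toFinset.mpr hn), factorial_zero],
    Finset.prod_insert (by simpa using ha), Multiset.count_add, Multiset.count_replicate_self,
    Multiset.count_eq_zero_of_notMem ha, zero_add]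
  congr 1
  refine Finset.prod_congr rfl fun n hn => ?_
  have hna : n ≠ a := by rintro rfl; exact ha (by simpa using hn)
  rw [Multiset.count_add, Multiset.count_replicate, if_neg hna.symm, add_zero]

theorem filter_ne_add_replicate_count (s : Multiset α) (a : α) :
    s.filter (· ≠ a) + replicate (s.count a) a = s := by
  simpa only [ne_eq, not_not, Multiset.filter_eq'] using Multiset.filter_add_not (· ≠ a) s

theorem filter_ne_add_replicate {m : Multiset α} {a : α} (ha : a ∉ m) (k : ℕ) :
    (m + replicate k a).filter (· ≠ a) = m := by
  rw [Multiset.filter_add, Multiset.filter_eq_self.mpr fun x hx => ne_of_mem_of_not_mem hx ha,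
    Multiset.filter_eq_nil.mpr fun x hx => by simp [Multiset.eq_of_mem_replicate hx], add_zero]

end Multiset

namespace Equiv.Perm

open Fintype

variable {α : Type*} [Fintype α] [DecidableEq α]

/- Both sides equal `(card α)! (card β)! / z`, where `z = (card β - m.sum)! * m.prod * ∏ (count)!`
is the factor the class-size formula assigns to `m` in both groups. -/
theorem card_cycleType_add_replicate_mul {β : Type*} [Fintype β] [DecidableEq β]
    {m : Multiset ℕ} {a k : ℕ} (ha : a ∉ m) (hm : ∀ x ∈ m + Multiset.replicate k a, 2 ≤ x)
    (hsum : (m + Multiset.replicate k a).sum ≤ card α) (hβ : card β = card α - a * k) :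
    #{g : Perm α | g.cycleType = m + Multiset.replicate k a} * (a ^ k * k !) * (card β)! =
      (card α)! * #{g : Perm β | g.cycleType = m} := by
  have hα := card_of_cycleType_mul_eq α (m + Multiset.replicate k a)
  rw [if_pos ⟨hsum, hm⟩] at hα
  rw [Multiset.sum_add, Multiset.sum_replicate, smul_eq_mul] at hsum
  have hβ' := card_of_cycleType_mul_eq β m
  rw [if_pos ⟨by lia, fun x hx => hm x (Multiset.mem_add.mpr (Or.inl hx))⟩] at hβ'
  rw [Multiset.prod_factorial_count_add_replicate ha, Multiset.sum_add, Multiset.prod_add,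
    Multiset.sum_replicate, Multiset.prod_replicate, smul_eq_mul,
    show card α - (m.sum + k * a) = card β - m.sum by lia] at hα
  rw [← hα, ← hβ']
  ring

theorem card_filter_count_cycleType_mul_le (a k : ℕ) :
    #{g : Perm α | g.cycleType.count a = k} * (a ^ k * k !) ≤ (card α)! := by
  set S : Finset (Perm α) := {g | g.cycleType.count a = k}
  let rest : Perm α → Multiset ℕ := fun g => g.cycleType.filter (· ≠ a)
  have hrest : ∀ g ∈ S, g.cycleType = rest g + Multiset.replicate k a := fun g hg => by
    rw [← (Finset.mem_filter.mp hg).2, Multiset.filter_ne_add_replicate_count]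
  have hadmissible : ∀ m ∈ S.image rest, a ∉ m ∧ (∀ x ∈ m + Multiset.replicate k a, 2 ≤ x) ∧
      (m + Multiset.replicate k a).sum ≤ card α := by
    simp only [Finset.mem_image]
    rintro m ⟨g, hg, rfl⟩
    rw [← hrest g hg]
    exact ⟨fun h => (Multiset.mem_filter.mp h).2 rfl, fun x => two_le_of_mem_cycleType,
      sum_cycleType_le g⟩
  have hfibre : ∀ m ∈ S.image rest,
      #{g ∈ S | rest g = m} = #{g : Perm α | g.cycleType = m + Multiset.replicate k a} := by
    intro m hm
    have ham := (hadmissible m hm).1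
    congr 1
    ext g
    simp only [Finset.mem_filter, Finset.mem_univ, true_and, S]
    constructor
    · rintro ⟨hg, rfl⟩
      exact hrest g (by simpa [S] using hg)
    · intro hg
      simp only [rest, hg, Multiset.filter_ne_add_replicate ham, Multiset.count_add,
        Multiset.count_replicate_self, Multiset.count_eq_zero_of_notMem ham, zero_add, and_true]
  have hcount : ∑ m ∈ S.image rest, #{h : Perm (Fin (card α - a * k)) | h.cycleType = m} ≤
      (card α - a * k)! := by
    rw [Finset.sum_card_fiberwise_eq_card_filter]
    exact (Finset.card_le_univ _).trans_eq (by rw [Fintype.card_perm, Fintype.card_fin])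
  refine Nat.le_of_mul_le_mul_right (c := (card α - a * k)!) ?_ (factorial_pos _)
  calc #S * (a ^ k * k !) * (card α - a * k)!
      = ∑ m ∈ S.image rest, #{g : Perm α | g.cycleType = m + Multiset.replicate k a} *
          (a ^ k * k !) * (card (Fin (card α - a * k)))! := by
        rw [Finset.card_eq_sum_card_image rest S, Finset.sum_mul, Finset.sum_mul,
          Fintype.card_fin]
        exact Finset.sum_congr rfl fun m hm => by rw [hfibre m hm]
    _ = (card α)! * ∑ m ∈ S.image rest, #{h : Perm (Fin (card α - a * k)) | h.cycleType = m} := by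
        rw [Finset.mul_sum]
        refine Finset.sum_congr rfl fun m hm => ?_
        obtain ⟨ham, hm, hsum⟩ := hadmissible m hm
        exact card_cycleType_add_replicate_mul ham hm hsum (Fintype.card_fin _)
    _ ≤ (card α)! * (card α - a * k)! := Nat.mul_le_mul_left _ hcount

end Equiv.Perm

theorem factorial_le_three_mul_numDerangements : ∀ {n : ℕ}, 2 ≤ n → n ! ≤ 3 * numDerangements n
  | 2, _ => by decide
  | 3, _ => by decide
  | n + 4, _ => by
    have h2 := factorial_le_three_mul_numDerangements (n := n + 2) (by lia)
    have h3 := factorial_le_three_mul_numDerangements (n := n + 3) (by lia)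
    have hfac : (n + 4)! = (n + 3) * ((n + 2)! + (n + 3)!) := by
      simp only [factorial_succ]; ring
    rw [numDerangements_add_two, hfac]
    nlinarith

theorem numDerangementsOf_eq_numDerangements (N : ℕ) :
    numDerangementsOf N = numDerangements N := by
  have h := card_derangements_eq_numDerangements (Fin N)
  rw [Fintype.card_fin] at h
  rw [← h, numDerangementsOf, ← Nat.card_eq_fintype_card]
  rfl

theorem numDerangementsWithPairs_mul_le (N k : ℕ) :
    numDerangementsWithPairs N k * (2 ^ k * k !) ≤ N ! := by
  refine le_trans (Nat.mul_le_mul_right _ ?_)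
    ((Equiv.Perm.card_filter_count_cycleType_mul_le 2 k).trans_eq (by rw [Fintype.card_fin]))
  rw [numDerangementsWithPairs, Nat.card_eq_fintype_card, Fintype.card_subtype]
  exact Finset.card_le_card fun σ => by simp +contextual

theorem exp_mul_numDerangementsWithPairs_div_le (N : ℕ) (hN : 2 ≤ N) (s : ℝ) (k : ℕ) :
    Real.exp (s * k) * numDerangementsWithPairs N k / numDerangementsOf N ≤
      3 * ((Real.exp s / 2) ^ k / k !) := by
  have hD : (N ! : ℝ) ≤ 3 * numDerangementsOf N := by
    exact_mod_cast numDerangementsOf_eq_numDerangements N ▸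
      factorial_le_three_mul_numDerangements hN
  have hP : (numDerangementsWithPairs N k * (2 ^ k * k !) : ℝ) ≤ N ! := by
    exact_mod_cast numDerangementsWithPairs_mul_le N k
  have hpos : (0 : ℝ) < numDerangementsOf N := by
    have : (0 : ℝ) < N ! := by exact_mod_cast factorial_pos N
    linarith
  rw [div_pow, mul_comm s, Real.exp_nat_mul, div_le_iff₀ hpos]
  calc Real.exp s ^ k * numDerangementsWithPairs N k
      = Real.exp s ^ k / (2 ^ k * k !) * (numDerangementsWithPairs N k * (2 ^ k * k !)) := by
        field_simp
    _ ≤ Real.exp s ^ k / (2 ^ k * k !) * (3 * numDerangementsOf N) :=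
        mul_le_mul_of_nonneg_left (hP.trans hD) (by positivity)
    _ = 3 * (Real.exp s ^ k / 2 ^ k / k !) * numDerangementsOf N := by ring

theorem mgf_number_of_pairs_bounded (N : ℕ) (hN : 2 ≤ N) (s : ℝ) :
    ∑' k : ℕ,
        Real.exp (s * k) * (numDerangementsWithPairs N k : ℝ) /
          (numDerangementsOf N : ℝ) ≤
      3 * Real.exp (Real.exp s / 2 + 3 / 2) := by
  have hexp : HasSum (fun k : ℕ => 3 * ((Real.exp s / 2) ^ k / k !))
      (3 * Real.exp (Real.exp s / 2)) := by
    have h := NormedSpace.expSeries_div_hasSum_exp (Real.exp s / 2)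
    rw [← Real.exp_eq_exp_ℝ] at h
    exact h.mul_left 3
  have hbound := exp_mul_numDerangementsWithPairs_div_le N hN s
  have hnonneg : ∀ k : ℕ,
      0 ≤ Real.exp (s * k) * (numDerangementsWithPairs N k : ℝ) / (numDerangementsOf N : ℝ) :=
    fun k => by positivity
  calc _ ≤ 3 * Real.exp (Real.exp s / 2) :=
        ((Summable.of_nonneg_of_le hnonneg hbound hexp.summable).tsum_le_tsum
          hbound hexp.summable).trans_eq hexp.tsum_eq
    _ ≤ 3 * Real.exp (Real.exp s / 2 + 3 / 2) := by gcongr; linarith
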